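/- Let V be a finite-dimensional real inner product space and let A, B be symmetric linear endomorphisms of V satisfying BX ∧ AY − BY ∧ AX = 0 in Λ²V for all X, Y ∈ V. Then: (i) if rank A ≥ 2, then ker A ⊆ ker B; (ii) if rank A = 1, then B(ker A) ⊆ im A; and (iii) if 1 ≤ rank A ≤ 2, then rank B ≤ 2. -/

import Mathlib

/-
For `X ∈ ker A` the identity reduces to `BX ∧ AY = 0` for every `Y`, so `BX` and every vector
of `im A` are linearly dependent. If `BX ≠ 0` this puts `im A` inside the line through `BX`,
which is impossible when `rank A ≥ 2`; if `A ≠ 0` it puts `BX` on the line through some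
`AY ≠ 0`. For the rank bound, split `V = ker A ⊕ C`: then `im B = B(ker A) + B(C)` with
`dim B(C) ≤ dim C = rank A`, and `B(ker A)` is `0` when `rank A = 2` and lies in the line
`im A` when `rank A = 1`.
-/

open Module
open scoped RealInnerProductSpace

namespace ExteriorAlgebra

variable {K E : Type*} [Field K] [AddCommGroup E] [Module K E]

theorem ι_mul_ι_ne_zero {u v : E} (huv : LinearIndependent K ![u, v]) :
    ι K u * ι K v ≠ 0 := by
  let s : Set.powersetCard (Fin 2) 2 := ⟨Finset.univ, by simp⟩
  have hs := (exteriorPower.ιMulti_family_linearIndependent_field 2 huv).ne_zero s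
  have hid : ⇑(Set.powersetCard.ofFinEmbEquiv.symm s) = id :=
    (Finset.orderEmbOfFin_unique s.prop (fun _ => by simp [s]) strictMono_id).symm
  have hcoe : (exteriorPower.ιMulti_family K 2 ![u, v] s : ExteriorAlgebra K E) =
      ι K u * ι K v := by
    simp [exteriorPower.ιMulti_family, hid, ιMulti_apply]
  rwa [ne_eq, ← Submodule.coe_eq_zero, hcoe] at hs

theorem mem_span_singleton_of_ι_mul_ι_eq_zero {u v : E} (h : ι K u * ι K v = 0) (hv : v ≠ 0) :
    u ∈ K ∙ v := by
  by_contra hu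
  refine ι_mul_ι_ne_zero (linearIndependent_fin2.2 ⟨hv, fun a ha => hu ?_⟩) h
  exact Submodule.mem_span_singleton.2 ⟨a, ha⟩

theorem ι_mul_ι_eq_zero_comm {u v : E} (h : ι K u * ι K v = 0) : ι K v * ι K u = 0 := by
  rw [← neg_eq_zero, ← eq_neg_of_add_eq_zero_left (ι_add_mul_swap u v), h]

end ExteriorAlgebra

theorem LinearMap.finrank_range_le_finrank_map_ker_add {K V W U : Type*} [DivisionRing K]
    [AddCommGroup V] [Module K V] [AddCommGroup W] [Module K W] [AddCommGroup U] [Module K U]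
    [FiniteDimensional K V] (A : V →ₗ[K] W) (B : V →ₗ[K] U) :
    finrank K (range B) ≤ finrank K ((ker A).map B) + finrank K (range A) := by
  obtain ⟨C, hC⟩ := (ker A).exists_isCompl
  have hrange : range B = (ker A).map B ⊔ C.map B := by
    rw [← Submodule.map_sup, hC.sup_eq_top, Submodule.map_top]
  have hC_dim : finrank K C = finrank K (range A) := by
    have := Submodule.finrank_add_eq_of_isCompl hC
    have := A.finrank_range_add_finrank_ker
    omega
  calc finrank K (range B)
      ≤ finrank K ((ker A).map B) + finrank K (C.map B) :=
        hrange ▸ Submodule.finrank_add_le_finrank_add_finrank _ _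
    _ ≤ finrank K ((ker A).map B) + finrank K (range A) := by
        have := Submodule.finrank_map_le B C
        omega

namespace InfinitesimalBending

open ExteriorAlgebra LinearMap

variable {K V W : Type*} [Field K] [AddCommGroup V] [Module K V] [AddCommGroup W] [Module K W]
  {A B : V →ₗ[K] W}

theorem ι_mul_ι_eq_zero_of_mem_ker
    (h : ∀ X Y : V, ι K (B X) * ι K (A Y) - ι K (B Y) * ι K (A X) = 0)
    {X : V} (hX : X ∈ ker A) (Y : V) : ι K (B X) * ι K (A Y) = 0 := by
  simpa [mem_ker.1 hX] using h X Y

theorem ker_le_ker_of_two_le_finrank_range [FiniteDimensional K W]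
    (h : ∀ X Y : V, ι K (B X) * ι K (A Y) - ι K (B Y) * ι K (A X) = 0)
    (hA : 2 ≤ finrank K (range A)) : ker A ≤ ker B := by
  intro X hX
  by_contra hBX
  have hle : range A ≤ K ∙ B X := by
    rintro _ ⟨Y, rfl⟩
    exact mem_span_singleton_of_ι_mul_ι_eq_zero
      (ι_mul_ι_eq_zero_comm (ι_mul_ι_eq_zero_of_mem_ker h hX Y)) hBX
  have := Submodule.finrank_mono hle
  rw [finrank_span_singleton hBX] at this
  omega

theorem map_ker_le_range_of_ne_zero
    (h : ∀ X Y : V, ι K (B X) * ι K (A Y) - ι K (B Y) * ι K (A X) = 0)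
    (hA : A ≠ 0) : (ker A).map B ≤ range A := by
  obtain ⟨Y, hY⟩ := DFunLike.ne_iff.1 hA
  rintro _ ⟨X, hX, rfl⟩
  obtain ⟨a, ha⟩ := Submodule.mem_span_singleton.1
    (mem_span_singleton_of_ι_mul_ι_eq_zero (ι_mul_ι_eq_zero_of_mem_ker h hX Y) hY)
  exact ⟨a • Y, by rw [map_smul, ha]⟩

theorem finrank_range_le_two [FiniteDimensional K V] [FiniteDimensional K W]
    (h : ∀ X Y : V, ι K (B X) * ι K (A Y) - ι K (B Y) * ι K (A X) = 0)
    (hA₁ : 1 ≤ finrank K (range A)) (hA₂ : finrank K (range A) ≤ 2) :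
    finrank K (range B) ≤ 2 := by
  have hB := A.finrank_range_le_finrank_map_ker_add B
  rcases hA₂.lt_or_eq with hlt | heq
  · have hA0 : A ≠ 0 := by
      rintro rfl
      rw [range_zero, finrank_bot] at hA₁
      omega
    have := Submodule.finrank_mono (map_ker_le_range_of_ne_zero h hA0)
    omega
  · have hbot : (ker A).map B = ⊥ :=
      (le_ker_iff_map).1 (ker_le_ker_of_two_le_finrank_range h heq.ge)
    rw [hbot, finrank_bot] at hB
    omega

end InfinitesimalBending

theorem stmt_18_general {V : Type} [NormedAddCommGroup V] [InnerProductSpace ℝ V]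
    [FiniteDimensional ℝ V] (A B : V →ₗ[ℝ] V)
    (h : ∀ X Y : V,
      ExteriorAlgebra.ι ℝ (B X) * ExteriorAlgebra.ι ℝ (A Y)
        - ExteriorAlgebra.ι ℝ (B Y) * ExteriorAlgebra.ι ℝ (A X) = 0) :
    (2 ≤ finrank ℝ (LinearMap.range A) → LinearMap.ker A ≤ LinearMap.ker B) ∧
    (finrank ℝ (LinearMap.range A) = 1 →
      (LinearMap.ker A).map B ≤ LinearMap.range A) ∧
    (1 ≤ finrank ℝ (LinearMap.range A) ∧ finrank ℝ (LinearMap.range A) ≤ 2 →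
      finrank ℝ (LinearMap.range B) ≤ 2) := by
  refine ⟨InfinitesimalBending.ker_le_ker_of_two_le_finrank_range h, fun hA => ?_,
    fun hA => InfinitesimalBending.finrank_range_le_two h hA.1 hA.2⟩
  refine InfinitesimalBending.map_ker_le_range_of_ne_zero h ?_
  rintro rfl
  rw [LinearMap.range_zero, finrank_bot] at hA
  exact zero_ne_one hA

theorem stmt_18 {V : Type} [NormedAddCommGroup V] [InnerProductSpace ℝ V]
    [FiniteDimensional ℝ V] (A B : V →ₗ[ℝ] V)
    (hA : ∀ x y : V, ⟪A x, y⟫ = ⟪x, A y⟫) (hB : ∀ x y : V, ⟪B x, y⟫ = ⟪x, B y⟫)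
    (h : ∀ X Y : V,
      ExteriorAlgebra.ι ℝ (B X) * ExteriorAlgebra.ι ℝ (A Y)
        - ExteriorAlgebra.ι ℝ (B Y) * ExteriorAlgebra.ι ℝ (A X) = 0) :
    (2 ≤ finrank ℝ (LinearMap.range A) → LinearMap.ker A ≤ LinearMap.ker B) ∧
    (finrank ℝ (LinearMap.range A) = 1 →
      (LinearMap.ker A).map B ≤ LinearMap.range A) ∧
    (1 ≤ finrank ℝ (LinearMap.range A) ∧ finrank ℝ (LinearMap.range A) ≤ 2 →
      finrank ℝ (LinearMap.range B) ≤ 2) :=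
  stmt_18_general A B h
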